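/- arXiv:2410.06632 — 9 statements merged into one kernel-verified Lean document; each statement's English description precedes it below -/
import Mathlib

section
/- Let f_1, ..., f_m : ℝ^n → ℝ (m ≥ 2) be differentiable functions. If a point x' ∈ ℝ^n is locally weakly Pareto optimal, i.e., there exists a neighborhood U of x' such that no x ∈ U satisfies f_i(x) < f_i(x') for every i ∈ [m], then x' is Pareto stationary, i.e., for every direction d ∈ ℝ^n one has max_{i ∈ [m]} ⟨∇f_i(x'), d⟩ ≥ 0. -/
open scoped RealInnerProductSpace
open Filter

/-- If a point `x'` is locally weakly Pareto optimal for differentiable objectives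
`f 1, ..., f m` (`m ≥ 2`), then `x'` is Pareto stationary: for every direction `d`,
`max_{i} ⟨∇ f i x', d⟩ ≥ 0`. -/
theorem locally_weakly_pareto_optimal_implies_pareto_stationary
    {n m : ℕ} (hm : 2 ≤ m)
    (f : Fin m → EuclideanSpace ℝ (Fin n) → ℝ)
    (hf : ∀ i, Differentiable ℝ (f i))
    (x' : EuclideanSpace ℝ (Fin n))
    (hopt : ∃ U ∈ nhds x', ∀ x ∈ U, ¬ (∀ i, f i x < f i x'))
    (d : EuclideanSpace ℝ (Fin n)) :
    0 ≤ Finset.univ.sup'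
      (Finset.univ_nonempty_iff.mpr (Fin.pos_iff_nonempty.mp (by omega)))
      (fun i => ⟪gradient (f i) x', d⟫) := by
  by_contra h
  push_neg at h
  have hneg : ∀ i, ⟪gradient (f i) x', d⟫ < 0 := fun i =>
    (Finset.le_sup' (fun j => ⟪gradient (f j) x', d⟫) (Finset.mem_univ i)).trans_lt h
  obtain ⟨U, hU, hP⟩ := hopt
  have hcurve : HasDerivAt (fun t : ℝ => x' + t • d) d 0 := by
    simpa using ((hasDerivAt_id (0:ℝ)).smul_const d).const_add x'
  have hderiv : ∀ i, HasDerivAt (fun t : ℝ => f i (x' + t • d))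
      ⟪gradient (f i) x', d⟫ 0 := by
    intro i
    have hg : HasGradientAt (f i) (gradient (f i) x') x' :=
      ((hf i).differentiableAt).hasGradientAt
    have hF := hg.hasFDerivAt
    have hF' : HasFDerivAt (f i)
        ((InnerProductSpace.toDual ℝ _) (gradient (f i) x')) (x' + (0:ℝ) • d) := by
      simpa using hF
    have := hF'.comp_hasDerivAt 0 hcurve
    simpa [Function.comp_def] using this
  have key : ∀ i, ∀ᶠ t in nhdsWithin (0:ℝ) (Set.Ioi 0),
      f i (x' + t • d) < f i x' := by
    intro i
    have hs := hasDerivAt_iff_tendsto_slope.mp (hderiv i)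
    have hs' : Tendsto (slope (fun t : ℝ => f i (x' + t • d)) 0)
        (nhdsWithin (0:ℝ) (Set.Ioi 0)) (nhds ⟪gradient (f i) x', d⟫) :=
      hs.mono_left (nhdsWithin_mono _ (fun t ht => ne_of_gt ht))
    have hlt : ∀ᶠ t in nhdsWithin (0:ℝ) (Set.Ioi 0),
        slope (fun t : ℝ => f i (x' + t • d)) 0 t < 0 :=
      hs'.eventually (eventually_lt_nhds (hneg i))
    filter_upwards [hlt, self_mem_nhdsWithin] with t ht htpos
    have htpos' : (0:ℝ) < t := htpos
    rw [slope_def_field] at ht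
    have : (f i (x' + t • d) - f i (x' + (0:ℝ) • d)) / (t - 0) < 0 := by
      simpa [div_eq_iff, sub_eq_iff_eq_add] using ht
    rw [sub_zero] at this
    have hsub : f i (x' + t • d) - f i (x' + (0:ℝ) • d) < 0 := by
      rcases div_neg_iff.mp this with ⟨_, h2⟩ | ⟨h1, _⟩
      · linarith
      · exact h1
    simpa using hsub
  have hmem : ∀ᶠ t in nhdsWithin (0:ℝ) (Set.Ioi 0), x' + t • d ∈ U := by
    have hc : ContinuousAt (fun t : ℝ => x' + t • d) 0 := hcurve.continuousAt
    have : ∀ᶠ t in nhds (0:ℝ), x' + t • d ∈ U := by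
      have := hc.preimage_mem_nhds (by simpa using hU)
      exact this
    exact this.filter_mono nhdsWithin_le_nhds
  have hall : ∀ᶠ t in nhdsWithin (0:ℝ) (Set.Ioi 0),
      (x' + t • d ∈ U ∧ ∀ i, f i (x' + t • d) < f i x') := by
    filter_upwards [hmem, eventually_all.mpr key] with t h1 h2
    exact ⟨h1, h2⟩
  obtain ⟨t, htU, htf⟩ := hall.exists
  exact hP _ htU htf
end

section
/- Let g_1, ..., g_m ∈ ℝ^n and define φ : ℝ^n × Δ^m → ℝ by φ(d, λ) = Σ_{i=1}^m λ_i ⟨g_i, d⟩ + (1/2)‖d‖₂², where Δ^m is the standard simplex. Suppose λ* ∈ Δ^m minimizes λ ↦ ‖Σ_{i=1}^m λ_i g_i‖₂² over Δ^m, and set d* = −Σ_{i=1}^m λ*_i g_i. Then (d*, λ*) is a saddle point of φ on ℝ^n × Δ^m; that is, φ(d*, λ) ≤ φ(d*, λ*) ≤ φ(d, λ*) for all d ∈ ℝ^n and all λ ∈ Δ^m. -/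
open scoped RealInnerProductSpace

/-- If `λ*` minimizes `λ ↦ ‖Σ_i λ_i g_i‖²` over the standard simplex and
`d* = -Σ_i λ*_i g_i`, then `(d*, λ*)` is a saddle point of
`φ(d, λ) = Σ_i λ_i ⟨g i, d⟩ + (1/2)‖d‖²` on `ℝ^n × Δ^m`. -/
theorem mgda_dual_solution_is_saddle_point
    {n m : ℕ}
    (g : Fin m → EuclideanSpace ℝ (Fin n))
    (φ : EuclideanSpace ℝ (Fin n) → (Fin m → ℝ) → ℝ)
    (hφ : ∀ d lam, φ d lam = (∑ i, lam i * ⟪g i, d⟫) + (1 / 2) * ‖d‖ ^ 2)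
    (lamstar : Fin m → ℝ) (hlamstar : lamstar ∈ stdSimplex ℝ (Fin m))
    (hmin : ∀ lam ∈ stdSimplex ℝ (Fin m),
      ‖∑ i, lamstar i • g i‖ ^ 2 ≤ ‖∑ i, lam i • g i‖ ^ 2)
    (dstar : EuclideanSpace ℝ (Fin n))
    (hdstar : dstar = -∑ i, lamstar i • g i) :
    ∀ d : EuclideanSpace ℝ (Fin n), ∀ lam ∈ stdSimplex ℝ (Fin m),
      φ dstar lam ≤ φ dstar lamstar ∧ φ dstar lamstar ≤ φ d lamstar := by
  intro d lam hlam
  set A := ∑ i, lamstar i • g i with hA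
  have hsum : ∀ μ : Fin m → ℝ, ∀ v : EuclideanSpace ℝ (Fin n),
      (∑ i, μ i * ⟪g i, v⟫) = ⟪∑ i, μ i • g i, v⟫ := by
    intro μ v
    rw [sum_inner]
    simp [real_inner_smul_left, Finset.mul_sum, mul_assoc]
  have key : ∀ l ∈ stdSimplex ℝ (Fin m), ‖A‖ ^ 2 ≤ ⟪A, ∑ i, l i • g i⟫ := by
    intro l hl
    set B := ∑ i, l i • g i with hB
    have hq : ∀ t : ℝ, 0 ≤ t → t ≤ 1 →
        0 ≤ 2 * t * ⟪A, B - A⟫ + t ^ 2 * ‖B - A‖ ^ 2 := by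
      intro t ht0 ht1
      have hmem : (1 - t) • lamstar + t • l ∈ stdSimplex ℝ (Fin m) :=
        (convex_stdSimplex ℝ (Fin m)) hlamstar hl (by linarith) ht0 (by ring)
      have hm := hmin _ hmem
      have hGs : (∑ i, ((1 - t) • lamstar + t • l) i • g i) = A + t • (B - A) := by
        simp only [Pi.add_apply, Pi.smul_apply, smul_eq_mul, add_smul, mul_smul,
          Finset.sum_add_distrib, ← Finset.smul_sum]
        rw [← hA, ← hB]
        module
      rw [hGs] at hm
      have hexp : ‖A + t • (B - A)‖ ^ 2
          = ‖A‖ ^ 2 + 2 * t * ⟪A, B - A⟫ + t ^ 2 * ‖B - A‖ ^ 2 := by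
        rw [norm_add_sq_real, real_inner_smul_right, norm_smul]
        simp [abs_of_nonneg ht0]
        ring
      rw [hexp] at hm
      linarith
    have ha : 0 ≤ ⟪A, B - A⟫ := by
      by_contra h
      push_neg at h
      set a := ⟪A, B - A⟫ with hadef
      set b := ‖B - A‖ ^ 2 with hbdef
      have hb0 : 0 ≤ b := by positivity
      have h1 := hq 1 zero_le_one le_rfl
      have hbpos : 0 < b := by nlinarith
      have ht : 0 ≤ -a / b := div_nonneg (by linarith) hb0
      have ht1 : -a / b ≤ 1 := by
        rw [div_le_one hbpos]; nlinarith
      have h2 := hq (-a / b) ht ht1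
      have heq : 2 * (-a / b) * a + (-a / b) ^ 2 * b = -a ^ 2 / b := by
        field_simp; ring
      rw [heq] at h2
      have h3 := mul_nonneg h2 hb0
      rw [div_mul_cancel₀ _ (ne_of_gt hbpos)] at h3
      nlinarith
    have hex : ⟪A, B⟫ = ‖A‖ ^ 2 + ⟪A, B - A⟫ := by
      rw [inner_sub_right, real_inner_self_eq_norm_sq]; ring
    linarith
  constructor
  · rw [hφ, hφ, hsum, hsum, hdstar, ← hA]
    have h1 : ⟪∑ i, lam i • g i, -A⟫ = -⟪A, ∑ i, lam i • g i⟫ := by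
      rw [inner_neg_right, real_inner_comm]
    have h2 : ⟪A, -A⟫ = -‖A‖ ^ 2 := by
      rw [inner_neg_right, real_inner_self_eq_norm_sq]
    rw [h1, h2]
    have hk := key lam hlam
    simp only [norm_neg]
    linarith
  · rw [hφ, hφ, hsum, hsum, hdstar, ← hA]
    have h2 : ⟪A, -A⟫ = -‖A‖ ^ 2 := by
      rw [inner_neg_right, real_inner_self_eq_norm_sq]
    rw [h2]
    have hns := norm_add_sq_real A d
    have hn : 0 ≤ ‖A + d‖ ^ 2 := by positivity
    simp only [norm_neg]
    nlinarith
end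

section
/- Let E be a finite-dimensional real inner product space, X ⊆ E a nonempty convex set, N : E → ℝ a norm on E (satisfying N(x) ≥ 0, N(x) = 0 ↔ x = 0, N(cx) = |c|N(x), N(x+y) ≤ N(x)+N(y)), and let N*(y) = sup{⟨y, x⟩ : x ∈ E, N(x) ≤ 1} be its dual norm. Let ω : E → ℝ be differentiable with gradient ∇ω and strongly convex on X with modulus η > 0 with respect to N, i.e., ⟨∇ω(x') − ∇ω(x), x' − x⟩ ≥ η·N(x' − x)² for all x, x' ∈ X. Define the Bregman distance V(x, u) = ω(u) − ω(x) − ⟨∇ω(x), u − x⟩. Fix x ∈ X and y ∈ E, and suppose v ∈ X satisfies ⟨y, v − x⟩ + V(x, v) ≤ ⟨y, u − x⟩ + V(x, u) for all u ∈ X (i.e., v is a prox-mapping point P_x(y)). Then for every u ∈ X: V(v, u) ≤ V(x, u) + ⟨y, u − x⟩ + N*(y)²/(2η). -/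
/-!
The prox point `v` satisfies the first-order condition `⟪y + ∇ω v - ∇ω x, u - v⟫ ≥ 0`, and the
three-point identity `V(v, u) = V(x, u) - V(x, v) - ⟪∇ω v - ∇ω x, u - v⟫` turns it into
`V(v, u) ≤ V(x, u) + ⟪y, u - x⟫ + (⟪y, x - v⟫ - V(x, v))`. Strong convexity gives
`V(x, v) ≥ η/2 · N(v - x)²`, the dual norm gives `⟪y, x - v⟫ ≤ N*(y) · N(v - x)`, and
`a t - η t²/2 ≤ a²/(2η)` bounds the bracket.
-/

open scoped RealInnerProductSpace

namespace Seminorm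

def Renormed (E : Type*) : Type _ := E

theorem exists_norm_le_mul_of_finiteDimensional {E : Type*} [NormedAddCommGroup E]
    [NormedSpace ℝ E] [FiniteDimensional ℝ E] (p : Seminorm ℝ E) (hp : ∀ z, p z = 0 → z = 0) :
    ∃ C, 0 ≤ C ∧ ∀ z, ‖z‖ ≤ C * p z := by
  let : AddCommGroup (Renormed E) := inferInstanceAs (AddCommGroup E)
  let : NormedAddCommGroup (Renormed E) :=
    AddGroupNorm.toNormedAddCommGroup { p.toAddGroupSeminorm with eq_zero_of_map_eq_zero' := hp }
  let : NormedSpace ℝ (Renormed E) :=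
    { toModule := inferInstanceAs (Module ℝ E)
      norm_smul_le := fun c z => (map_smul_eq_mul p c z).le }
  have : FiniteDimensional ℝ (Renormed E) := inferInstanceAs (FiniteDimensional ℝ E)
  let ι : Renormed E →L[ℝ] E := LinearMap.toContinuousLinearMap LinearMap.id
  exact ⟨‖ι‖, norm_nonneg _, ι.le_opNorm⟩

variable {E : Type*} [NormedAddCommGroup E] [InnerProductSpace ℝ E]

theorem bddAbove_inner_image_le_one [FiniteDimensional ℝ E] (p : Seminorm ℝ E)
    (hp : ∀ z, p z = 0 → z = 0) (y : E) :
    BddAbove ((fun x => ⟪y, x⟫) '' {x | p x ≤ 1}) := by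
  obtain ⟨C, hC, hle⟩ := exists_norm_le_mul_of_finiteDimensional p hp
  refine ⟨‖y‖ * C, ?_⟩
  rintro _ ⟨w, hw, rfl⟩
  calc ⟪y, w⟫ ≤ ‖y‖ * ‖w‖ := real_inner_le_norm y w
    _ ≤ ‖y‖ * (C * 1) := by gcongr; exact (hle w).trans (by gcongr; exact hw)
    _ = ‖y‖ * C := by rw [mul_one]

theorem inner_le_sSup_mul [FiniteDimensional ℝ E] (p : Seminorm ℝ E)
    (hp : ∀ z, p z = 0 → z = 0) (y z : E) :
    ⟪y, z⟫ ≤ sSup ((fun x => ⟪y, x⟫) '' {x | p x ≤ 1}) * p z := by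
  rcases (apply_nonneg p z).eq_or_lt with hz | hz
  · simp [hp z hz.symm]
  · have hmem : (p z)⁻¹ • z ∈ {x | p x ≤ 1} := by
      simp [map_smul_eq_mul, abs_of_pos hz, hz.ne']
    have hle : ⟪y, (p z)⁻¹ • z⟫ ≤ _ :=
      le_csSup (bddAbove_inner_image_le_one p hp y) ⟨_, hmem, rfl⟩
    rwa [real_inner_smul_right, inv_mul_le_iff₀ hz, mul_comm] at hle

end Seminorm

theorem mul_sub_half_mul_sq_le {η : ℝ} (hη : 0 < η) (a t : ℝ) :
    a * t - η / 2 * t ^ 2 ≤ a ^ 2 / (2 * η) := by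
  rw [le_div_iff₀ (by positivity)]
  nlinarith [sq_nonneg (a - η * t)]

section Bregman

variable {E : Type*} [NormedAddCommGroup E] [InnerProductSpace ℝ E] [CompleteSpace E]

noncomputable def bregmanDivergence (ω : E → ℝ) (x u : E) : ℝ :=
  ω u - ω x - ⟪gradient ω x, u - x⟫

theorem hasDerivAt_comp_add_smul {ω : E → ℝ} {a b : E} {t : ℝ}
    (hω : DifferentiableAt ℝ ω (a + t • b)) :
    HasDerivAt (fun s : ℝ => ω (a + s • b)) ⟪gradient ω (a + t • b), b⟫ t := by
  have hline : HasDerivAt (fun s : ℝ => a + s • b) b t := by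
    simpa using ((hasDerivAt_id t).smul_const b).const_add a
  exact hω.hasGradientAt.hasFDerivAt.comp_hasDerivAt t hline

theorem hasGradientAt_inner_sub_add_bregmanDivergence {ω : E → ℝ} {v : E}
    (hω : DifferentiableAt ℝ ω v) (y x : E) :
    HasGradientAt (fun u => ⟪y, u - x⟫ + bregmanDivergence ω x u)
      (y + gradient ω v - gradient ω x) v := by
  have hfun : (fun u => ⟪y, u - x⟫ + bregmanDivergence ω x u) =
      fun u => ⟪y - gradient ω x, u⟫ + ω u + (⟪gradient ω x, x⟫ - ⟪y, x⟫ - ω x) := by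
    ext u
    simp only [bregmanDivergence, inner_sub_left, inner_sub_right]
    ring
  rw [hfun, hasGradientAt_iff_hasFDerivAt]
  refine (((innerSL ℝ (y - gradient ω x)).hasFDerivAt.add hω.hasFDerivAt).add_const _).congr_fderiv
    ?_
  ext w
  simp only [map_sub, add_apply, sub_apply, coe_innerSL_apply, inner_gradient_left, map_add,
    toDual_gradient, InnerProductSpace.toDual_apply_apply]
  ring

theorem mul_sq_le_bregmanDivergence {ω : E → ℝ} (hω : Differentiable ℝ ω) {X : Set E}
    (hX : Convex ℝ X) (p : Seminorm ℝ E) {η : ℝ} {x v : E} (hx : x ∈ X) (hv : v ∈ X)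
    (hstrong : ∀ x' ∈ X, η * p (x' - x) ^ 2 ≤ ⟪gradient ω x' - gradient ω x, x' - x⟫) :
    η / 2 * p (v - x) ^ 2 ≤ bregmanDivergence ω x v := by
  set d := v - x
  -- `G' ≥ 0` on `(0, 1)` is `hstrong` at `x + t • d` divided by `t`, and
  -- `G 1 - G 0 = V(x, v) - η / 2 * p (v - x) ^ 2`.
  let G : ℝ → ℝ := fun t => ω (x + t • d) - t * ⟪gradient ω x, d⟫ - η * p d ^ 2 * t ^ 2 / 2
  have hG : ∀ t, HasDerivAt G
      (⟪gradient ω (x + t • d), d⟫ - ⟪gradient ω x, d⟫ - η * p d ^ 2 * t) t := by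
    intro t
    have hquad := ((hasDerivAt_pow 2 t).const_mul (η * p d ^ 2)).div_const 2
    exact (((hasDerivAt_comp_add_smul (hω (x + t • d))).sub
      ((hasDerivAt_id t).mul_const ⟪gradient ω x, d⟫)).sub hquad).congr_deriv (by norm_num; ring)
  have hmono : MonotoneOn G (Set.Icc 0 1) := by
    refine monotoneOn_of_deriv_nonneg (convex_Icc 0 1)
      (fun t _ => (hG t).continuousAt.continuousWithinAt)
      (fun t _ => (hG t).differentiableAt.differentiableWithinAt) fun t ht => ?_
    rw [interior_Icc] at ht
    rw [(hG t).deriv]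
    have hs := hstrong _ (hX.add_smul_sub_mem hx hv ⟨ht.1.le, ht.2.le⟩)
    rw [add_sub_cancel_left, map_smul_eq_mul, Real.norm_of_nonneg ht.1.le, real_inner_smul_right,
      inner_sub_left] at hs
    nlinarith [ht.1]
  have h01 := hmono (Set.left_mem_Icc.mpr zero_le_one) (Set.right_mem_Icc.mpr zero_le_one)
    zero_le_one
  simp only [G, zero_smul, add_zero, zero_mul, sub_zero, one_smul, one_mul, add_sub_cancel, d]
    at h01
  simp only [bregmanDivergence]
  linarith

theorem bregmanDivergence_three_point (ω : E → ℝ) (x v u : E) :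
    bregmanDivergence ω v u =
      bregmanDivergence ω x u - bregmanDivergence ω x v - ⟪gradient ω v - gradient ω x, u - v⟫ := by
  simp only [bregmanDivergence, inner_sub_left, inner_sub_right]
  ring

theorem inner_gradient_sub_nonneg_of_isMinOn {f : E → ℝ} {f' : E} {X : Set E} {v u : E}
    (hX : Convex ℝ X) (hf : HasGradientAt f f' v) (hmin : IsMinOn f X v) (hv : v ∈ X)
    (hu : u ∈ X) : 0 ≤ ⟪f', u - v⟫ := by
  simpa using hmin.localize.hasFDerivWithinAt_nonneg hf.hasFDerivAt.hasFDerivWithinAt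
    (sub_mem_posTangentConeAt_of_segment_subset (hX.segment_subset hv hu))

end Bregman

theorem prox_mapping_bregman_inequality_general
    {E : Type*} [NormedAddCommGroup E] [InnerProductSpace ℝ E] [FiniteDimensional ℝ E]
    (X : Set E) (hXconv : Convex ℝ X)
    (N : E → ℝ)
    (hN_eq_zero : ∀ x, N x = 0 ↔ x = 0)
    (hN_smul : ∀ (c : ℝ) (x : E), N (c • x) = |c| * N x)
    (hN_add : ∀ x y, N (x + y) ≤ N x + N y)
    (Nstar : E → ℝ)
    (hNstar : ∀ y, Nstar y = sSup ((fun x => ⟪y, x⟫) '' {x : E | N x ≤ 1}))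
    (ω : E → ℝ) (hω : Differentiable ℝ ω)
    (η : ℝ) (hη : 0 < η)
    (hstrong : ∀ x ∈ X, ∀ x' ∈ X,
      η * N (x' - x) ^ 2 ≤ ⟪gradient ω x' - gradient ω x, x' - x⟫)
    (V : E → E → ℝ)
    (hV : ∀ x u, V x u = ω u - ω x - ⟪gradient ω x, u - x⟫)
    (x : E) (hx : x ∈ X) (y : E)
    (v : E) (hv : v ∈ X)
    (hprox : ∀ u ∈ X, ⟪y, v - x⟫ + V x v ≤ ⟪y, u - x⟫ + V x u) :
    ∀ u ∈ X, V v u ≤ V x u + ⟪y, u - x⟫ + Nstar y ^ 2 / (2 * η) := by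
  intro u hu
  obtain rfl : V = bregmanDivergence ω := funext fun x => funext (hV x)
  let p : Seminorm ℝ E := Seminorm.of N hN_add fun c z => by rw [Real.norm_eq_abs, hN_smul]
  have hp : ∀ z, p z = 0 → z = 0 := fun z => (hN_eq_zero z).mp
  have hopt : 0 ≤ ⟪y + gradient ω v - gradient ω x, u - v⟫ :=
    inner_gradient_sub_nonneg_of_isMinOn hXconv
      (hasGradientAt_inner_sub_add_bregmanDivergence (hω v) y x) hprox hv hu
  have hlower : η / 2 * N (v - x) ^ 2 ≤ bregmanDivergence ω x v :=
    mul_sq_le_bregmanDivergence hω hXconv p hx hv (hstrong x hx)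
  have hdual : ⟪y, x - v⟫ ≤ Nstar y * N (v - x) := by
    have h := p.inner_le_sSup_mul hp y (x - v)
    rw [map_sub_rev] at h
    rwa [hNstar]
  have hsplit : ⟪y, u - v⟫ = ⟪y, u - x⟫ + ⟪y, x - v⟫ := by
    rw [← inner_add_right, sub_add_sub_cancel]
  rw [inner_sub_left, inner_add_left] at hopt
  calc bregmanDivergence ω v u
      ≤ bregmanDivergence ω x u + ⟪y, u - x⟫ + (⟪y, x - v⟫ - bregmanDivergence ω x v) := by
        rw [bregmanDivergence_three_point ω x v u, inner_sub_left]; linarith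
    _ ≤ bregmanDivergence ω x u + ⟪y, u - x⟫ + (Nstar y * N (v - x) - η / 2 * N (v - x) ^ 2) := by
        gcongr
    _ ≤ bregmanDivergence ω x u + ⟪y, u - x⟫ + Nstar y ^ 2 / (2 * η) := by
        gcongr; exact mul_sub_half_mul_sq_le hη _ _

/-- Prox-mapping inequality for a mirror-descent step (Lemma 2.1 of Nemirovski et al.):
if `v = P_x(y)` is the prox point of `y` at `x ∈ X` for a distance generating function `ω`
that is `η`-strongly convex on `X` with respect to a norm `N`, then for every `u ∈ X`,
`V(v, u) ≤ V(x, u) + ⟨y, u - x⟩ + N*(y)² / (2η)`, where `V` is the Bregman distance and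
`N*` is the dual norm. -/
theorem prox_mapping_bregman_inequality
    {E : Type*} [NormedAddCommGroup E] [InnerProductSpace ℝ E] [FiniteDimensional ℝ E]
    (X : Set E) (hXne : X.Nonempty) (hXconv : Convex ℝ X)
    (N : E → ℝ)
    (hN_nonneg : ∀ x, 0 ≤ N x)
    (hN_eq_zero : ∀ x, N x = 0 ↔ x = 0)
    (hN_smul : ∀ (c : ℝ) (x : E), N (c • x) = |c| * N x)
    (hN_add : ∀ x y, N (x + y) ≤ N x + N y)
    (Nstar : E → ℝ)
    (hNstar : ∀ y, Nstar y = sSup ((fun x => ⟪y, x⟫) '' {x : E | N x ≤ 1}))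
    (ω : E → ℝ) (hω : Differentiable ℝ ω)
    (η : ℝ) (hη : 0 < η)
    (hstrong : ∀ x ∈ X, ∀ x' ∈ X,
      η * N (x' - x) ^ 2 ≤ ⟪gradient ω x' - gradient ω x, x' - x⟫)
    (V : E → E → ℝ)
    (hV : ∀ x u, V x u = ω u - ω x - ⟪gradient ω x, u - x⟫)
    (x : E) (hx : x ∈ X) (y : E)
    (v : E) (hv : v ∈ X)
    (hprox : ∀ u ∈ X, ⟪y, v - x⟫ + V x v ≤ ⟪y, u - x⟫ + V x u) :
    ∀ u ∈ X, V v u ≤ V x u + ⟪y, u - x⟫ + Nstar y ^ 2 / (2 * η) :=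
  prox_mapping_bregman_inequality_general X hXconv N hN_eq_zero hN_smul hN_add Nstar hNstar ω hω η
    hη hstrong V hV x hx y v hv hprox
end

section
/- Let E be a finite-dimensional real inner product space, X ⊆ E a nonempty convex set, N a norm on E with dual norm N*(y) = sup{⟨y, x⟩ : N(x) ≤ 1}, and ω : E → ℝ differentiable and strongly convex on X with modulus η > 0 with respect to N; let V be the associated Bregman distance. Let ζ_1, ..., ζ_S ∈ E, let v_1 ∈ X, and suppose for each s = 1, ..., S the point v_{s+1} ∈ X satisfies ⟨ζ_s, v_{s+1} − v_s⟩ + V(v_s, v_{s+1}) ≤ ⟨ζ_s, u − v_s⟩ + V(v_s, u) for all u ∈ X (i.e., v_{s+1} = P_{v_s}(ζ_s)). Then for every u ∈ X: Σ_{s=1}^S ⟨ζ_s, v_s − u⟩ ≤ V(v_1, u) + (1/(2η)) Σ_{s=1}^S N*(ζ_s)². -/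
open scoped RealInnerProductSpace

/-!
The prox point `v (s+1)` minimises `⟪ζ s, ·⟫ + V (v s) ·` over the convex set `X`; its first-order
optimality condition together with the three-point identity for Bregman divergences gives
`⟪ζ s, v (s+1) - u⟫ ≤ V (v s) u - V (v (s+1)) u - V (v s) (v (s+1))`. Strong convexity bounds
`V (v s) (v (s+1))` below by `η/2 · N (v s - v (s+1))²`, while
`⟪ζ s, v s - v (s+1)⟫ ≤ N* (ζ s) · N (v s - v (s+1))` (the supremum defining `N*` is finite since
all norms on a finite-dimensional space are equivalent), so by AM-GM each step costs at most
`N* (ζ s)² / (2η)` beyond the telescoping difference `V (v s) u - V (v (s+1)) u`.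
-/

open Set

theorem mul_sub_div_two_mul_sq_le {a n η : ℝ} (hη : 0 < η) :
    a * n - η / 2 * n ^ 2 ≤ a ^ 2 / (2 * η) := by
  rw [le_div_iff₀ (by positivity)]
  nlinarith [sq_nonneg (a - η * n)]

theorem add_div_two_le_sub_of_hasDerivAt {φ φ' : ℝ → ℝ} {a b : ℝ}
    (hφ : ∀ t, HasDerivAt φ (φ' t) t) (hφ' : ∀ t ∈ Ioo (0 : ℝ) 1, b + a * t ≤ φ' t) :
    b + a / 2 ≤ φ 1 - φ 0 := by
  let h := fun t => φ t - b * t - a / 2 * t ^ 2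
  have hh : ∀ t, HasDerivAt h (φ' t - b - a * t) t := fun t =>
    (((hφ t).sub ((hasDerivAt_id' t).const_mul b)).sub
      ((hasDerivAt_pow 2 t).const_mul (a / 2))).congr_deriv (by ring)
  have hmono : MonotoneOn h (Icc 0 1) := by
    refine monotoneOn_of_hasDerivWithinAt_nonneg (convex_Icc 0 1)
      (fun t _ => (hh t).continuousAt.continuousWithinAt) (fun t _ => (hh t).hasDerivWithinAt)
      (fun t ht => ?_)
    rw [interior_Icc] at ht
    linarith [hφ' t ht]
  have := hmono (left_mem_Icc.2 zero_le_one) (right_mem_Icc.2 zero_le_one) zero_le_one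
  simp only [h] at this
  linarith

def WithNorm {E : Type*} (_N : E → ℝ) : Type _ := E

instance {E : Type*} [AddCommGroup E] (N : E → ℝ) : AddCommGroup (WithNorm N) :=
  inferInstanceAs (AddCommGroup E)

instance {E : Type*} [AddCommGroup E] [Module ℝ E] (N : E → ℝ) : Module ℝ (WithNorm N) :=
  inferInstanceAs (Module ℝ E)

instance {E : Type*} [AddCommGroup E] [Module ℝ E] [FiniteDimensional ℝ E] (N : E → ℝ) :
    FiniteDimensional ℝ (WithNorm N) :=
  inferInstanceAs (FiniteDimensional ℝ E)

section NormDuality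

variable {E : Type*} [NormedAddCommGroup E] [InnerProductSpace ℝ E] {N : E → ℝ}

theorem exists_norm_le_mul_of_finiteDimensional [FiniteDimensional ℝ E]
    (h_eq_zero : ∀ x, N x = 0 ↔ x = 0) (h_smul : ∀ (c : ℝ) (x : E), N (c • x) = |c| * N x)
    (h_add : ∀ x y, N (x + y) ≤ N x + N y) :
    ∃ C, 0 ≤ C ∧ ∀ x : E, ‖x‖ ≤ C * N x := by
  let p : AddGroupNorm (WithNorm N) :=
    { toFun := N
      map_zero' := (h_eq_zero 0).mpr rfl
      add_le' := h_add
      neg' := fun x : E => show N (-x) = N x by simpa [neg_smul] using h_smul (-1) x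
      eq_zero_of_map_eq_zero' := fun x => (h_eq_zero x).mp }
  let _ : NormedAddCommGroup (WithNorm N) := p.toNormedAddCommGroup
  let _ : NormedSpace ℝ (WithNorm N) := ⟨fun c x => (h_smul c x).le⟩
  -- the identity from `(E, N)` to `(E, ‖·‖)` is bounded, as is every linear map on a
  -- finite-dimensional normed space
  let toE : WithNorm N →L[ℝ] E := LinearMap.toContinuousLinearMap LinearMap.id
  exact ⟨‖toE‖, norm_nonneg _, toE.le_opNorm⟩

noncomputable def dualNorm (N : E → ℝ) (y : E) : ℝ := sSup ((fun x => ⟪y, x⟫) '' {x | N x ≤ 1})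

theorem inner_le_dualNorm_mul [FiniteDimensional ℝ E] (h_nonneg : ∀ x, 0 ≤ N x)
    (h_eq_zero : ∀ x, N x = 0 ↔ x = 0) (h_smul : ∀ (c : ℝ) (x : E), N (c • x) = |c| * N x)
    (h_add : ∀ x y, N (x + y) ≤ N x + N y) (y x : E) :
    ⟪y, x⟫ ≤ dualNorm N y * N x := by
  obtain ⟨C, hC, hnorm⟩ := exists_norm_le_mul_of_finiteDimensional h_eq_zero h_smul h_add
  have hbdd : BddAbove ((fun x => ⟪y, x⟫) '' {x | N x ≤ 1}) := by
    refine ⟨‖y‖ * C, ?_⟩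
    rintro _ ⟨z, hz, rfl⟩
    calc ⟪y, z⟫ ≤ ‖y‖ * ‖z‖ := real_inner_le_norm y z
      _ ≤ ‖y‖ * (C * 1) := by gcongr; exact (hnorm z).trans (by gcongr; exact hz)
      _ = ‖y‖ * C := by rw [mul_one]
  rcases (h_nonneg x).eq_or_lt with hx | hx
  · obtain rfl := (h_eq_zero x).mp hx.symm
    simp [← hx]
  · have hunit : N ((N x)⁻¹ • x) ≤ 1 := by
      rw [h_smul, abs_of_pos (inv_pos.mpr hx), inv_mul_cancel₀ hx.ne']
    have hle : ⟪y, (N x)⁻¹ • x⟫ ≤ dualNorm N y := le_csSup hbdd ⟨_, hunit, rfl⟩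
    rw [real_inner_smul_right, inv_mul_le_iff₀ hx] at hle
    linarith

end NormDuality

section Bregman

variable {E : Type*} [NormedAddCommGroup E] [InnerProductSpace ℝ E] [CompleteSpace E]

noncomputable def bregmanDiv (ω : E → ℝ) (x u : E) : ℝ := ω u - ω x - ⟪gradient ω x, u - x⟫

theorem mul_sq_le_bregmanDiv {X : Set E} {N ω : E → ℝ} {η : ℝ} (hX : Convex ℝ X)
    (h_smul : ∀ (c : ℝ) (x : E), N (c • x) = |c| * N x) (hω : Differentiable ℝ ω)
    (hstrong : ∀ x ∈ X, ∀ x' ∈ X, η * N (x' - x) ^ 2 ≤ ⟪gradient ω x' - gradient ω x, x' - x⟫)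
    {x y : E} (hx : x ∈ X) (hy : y ∈ X) :
    η / 2 * N (x - y) ^ 2 ≤ bregmanDiv ω x y := by
  let φ := fun t : ℝ => ω (x + t • (y - x))
  have hφ : ∀ t, HasDerivAt φ ⟪gradient ω (x + t • (y - x)), y - x⟫ t := fun t =>
    (hω _).hasGradientAt.hasFDerivAt.comp_hasDerivAt t
      (((hasDerivAt_id t).smul_const (y - x)).const_add x |>.congr_deriv (one_smul ℝ _))
  have hφ' : ∀ t ∈ Ioo (0 : ℝ) 1,
      ⟪gradient ω x, y - x⟫ + η * N (x - y) ^ 2 * t ≤ ⟪gradient ω (x + t • (y - x)), y - x⟫ := by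
    intro t ht
    have hxt : x + t • (y - x) ∈ X := hX.add_smul_sub_mem hx hy (Ioo_subset_Icc_self ht)
    have hN : N (x - (x + t • (y - x))) = t * N (x - y) := by
      rw [show x - (x + t • (y - x)) = t • (x - y) by module, h_smul, abs_of_pos ht.1]
    have hinner : ⟪gradient ω x - gradient ω (x + t • (y - x)), x - (x + t • (y - x))⟫ =
        t * (⟪gradient ω (x + t • (y - x)), y - x⟫ - ⟪gradient ω x, y - x⟫) := by
      rw [show x - (x + t • (y - x)) = (-t) • (y - x) by module, real_inner_smul_right,
        inner_sub_left]
      ring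
    have := hstrong _ hxt x hx
    rw [hN, hinner] at this
    nlinarith [ht.1]
  have := add_div_two_le_sub_of_hasDerivAt hφ hφ'
  simp only [φ, zero_smul, one_smul, add_zero, add_sub_cancel] at this
  rw [bregmanDiv]
  linarith

theorem bregmanDiv_sub_bregmanDiv_sub_bregmanDiv (ω : E → ℝ) (x y u : E) :
    bregmanDiv ω x u - bregmanDiv ω y u - bregmanDiv ω x y =
      ⟪gradient ω y - gradient ω x, u - y⟫ := by
  simp only [bregmanDiv, inner_sub_left, inner_sub_right]
  ring

theorem IsMinOn.inner_gradient_sub_nonneg {X : Set E} {f : E → ℝ} {g a u : E} (hX : Convex ℝ X)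
    (hmin : IsMinOn f X a) (hf : HasGradientAt f g a) (ha : a ∈ X) (hu : u ∈ X) :
    0 ≤ ⟪g, u - a⟫ :=
  hmin.localize.hasFDerivWithinAt_nonneg hf.hasFDerivAt.hasFDerivWithinAt
    (sub_mem_posTangentConeAt_of_segment_subset (hX.segment_subset ha hu))

theorem hasGradientAt_inner_sub_add_bregmanDiv {ω : E → ℝ} {a : E} (hω : DifferentiableAt ℝ ω a)
    (ζ x : E) :
    HasGradientAt (fun w => ⟪ζ, w - x⟫ + bregmanDiv ω x w)
      (ζ + gradient ω a - gradient ω x) a := by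
  have hfun : (fun w => ⟪ζ, w - x⟫ + bregmanDiv ω x w) =
      fun w => ⟪ζ - gradient ω x, w⟫ + ω w - (⟪ζ, x⟫ + ω x - ⟪gradient ω x, x⟫) := by
    ext w
    simp only [bregmanDiv, inner_sub_left, inner_sub_right]
    ring
  rw [hfun, hasGradientAt_iff_hasFDerivAt]
  refine (((innerSL ℝ (ζ - gradient ω x)).hasFDerivAt.add
    hω.hasGradientAt.hasFDerivAt).sub_const _).congr_fderiv ?_
  ext w
  simp only [add_apply, innerSL_apply_apply, InnerProductSpace.toDual_apply_apply,
    inner_add_left, inner_sub_left]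
  ring

theorem inner_sub_le_bregmanDiv_of_isMinOn {X : Set E} {ω : E → ℝ} {ζ x v u : E}
    (hX : Convex ℝ X) (hω : DifferentiableAt ℝ ω v) (hv : v ∈ X) (hu : u ∈ X)
    (hmin : IsMinOn (fun w => ⟪ζ, w - x⟫ + bregmanDiv ω x w) X v) :
    ⟪ζ, v - u⟫ ≤ bregmanDiv ω x u - bregmanDiv ω v u - bregmanDiv ω x v := by
  have := hmin.inner_gradient_sub_nonneg hX (hasGradientAt_inner_sub_add_bregmanDiv hω ζ x) hv hu
  rw [bregmanDiv_sub_bregmanDiv_sub_bregmanDiv, ← neg_sub u v, inner_neg_right]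
  rw [add_sub_assoc, inner_add_left] at this
  linarith

theorem inner_sub_le_bregmanDiv_sub_add_sq_div {X : Set E} {N ω : E → ℝ} {η c : ℝ}
    {ζ x v u : E} (hX : Convex ℝ X) (h_smul : ∀ (c : ℝ) (x : E), N (c • x) = |c| * N x)
    (hω : Differentiable ℝ ω) (hη : 0 < η)
    (hstrong : ∀ x ∈ X, ∀ x' ∈ X, η * N (x' - x) ^ 2 ≤ ⟪gradient ω x' - gradient ω x, x' - x⟫)
    (hx : x ∈ X) (hv : v ∈ X) (hu : u ∈ X)
    (hmin : IsMinOn (fun w => ⟪ζ, w - x⟫ + bregmanDiv ω x w) X v)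
    (hdual : ⟪ζ, x - v⟫ ≤ c * N (x - v)) :
    ⟪ζ, x - u⟫ ≤ bregmanDiv ω x u - bregmanDiv ω v u + c ^ 2 / (2 * η) := by
  have hprox := inner_sub_le_bregmanDiv_of_isMinOn hX (hω v) hv hu hmin
  have hbregman := mul_sq_le_bregmanDiv hX h_smul hω hstrong hx hv
  have hamgm := mul_sub_div_two_mul_sq_le (a := c) (n := N (x - v)) hη
  have hsplit : ⟪ζ, x - u⟫ = ⟪ζ, x - v⟫ + ⟪ζ, v - u⟫ := by
    rw [← inner_add_right, sub_add_sub_cancel]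
  linarith

end Bregman

theorem prox_mapping_telescoping_inequality_general
    {E : Type*} [NormedAddCommGroup E] [InnerProductSpace ℝ E] [FiniteDimensional ℝ E]
    (X : Set E) (hXconv : Convex ℝ X)
    (N : E → ℝ)
    (hN_nonneg : ∀ x, 0 ≤ N x)
    (hN_eq_zero : ∀ x, N x = 0 ↔ x = 0)
    (hN_smul : ∀ (c : ℝ) (x : E), N (c • x) = |c| * N x)
    (hN_add : ∀ x y, N (x + y) ≤ N x + N y)
    (Nstar : E → ℝ)
    (hNstar : ∀ y, Nstar y = sSup ((fun x => ⟪y, x⟫) '' {x : E | N x ≤ 1}))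
    (ω : E → ℝ) (hω : Differentiable ℝ ω)
    (η : ℝ) (hη : 0 < η)
    (hstrong : ∀ x ∈ X, ∀ x' ∈ X,
      η * N (x' - x) ^ 2 ≤ ⟪gradient ω x' - gradient ω x, x' - x⟫)
    (V : E → E → ℝ)
    (hV : ∀ x u, V x u = ω u - ω x - ⟪gradient ω x, u - x⟫)
    (S : ℕ) (ζ : ℕ → E) (v : ℕ → E)
    (hv0 : v 0 ∈ X)
    (hvmem : ∀ s < S, v (s + 1) ∈ X)
    (hprox : ∀ s < S, ∀ u ∈ X,
      ⟪ζ s, v (s + 1) - v s⟫ + V (v s) (v (s + 1)) ≤ ⟪ζ s, u - v s⟫ + V (v s) u) :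
    ∀ u ∈ X,
      ∑ s ∈ Finset.range S, ⟪ζ s, v s - u⟫ ≤
        V (v 0) u + (1 / (2 * η)) * ∑ s ∈ Finset.range S, Nstar (ζ s) ^ 2 := by
  intro u hu
  obtain rfl : V = bregmanDiv ω := funext₂ hV
  obtain rfl : Nstar = dualNorm N := funext hNstar
  have hmem : ∀ s ≤ S, v s ∈ X
    | 0, _ => hv0
    | s + 1, hs => hvmem s hs
  have hstep : ∀ s ∈ Finset.range S, ⟪ζ s, v s - u⟫ ≤
      bregmanDiv ω (v s) u - bregmanDiv ω (v (s + 1)) u + dualNorm N (ζ s) ^ 2 / (2 * η) := by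
    intro s hs
    rw [Finset.mem_range] at hs
    exact inner_sub_le_bregmanDiv_sub_add_sq_div hXconv hN_smul hω hη hstrong (hmem s hs.le)
      (hvmem s hs) hu (isMinOn_iff.2 (hprox s hs))
      (inner_le_dualNorm_mul hN_nonneg hN_eq_zero hN_smul hN_add _ _)
  have hlast : 0 ≤ bregmanDiv ω (v S) u :=
    (mul_sq_le_bregmanDiv hXconv hN_smul hω hstrong (hmem S le_rfl) hu).trans'
      (mul_nonneg (half_pos hη).le (sq_nonneg _))
  calc ∑ s ∈ Finset.range S, ⟪ζ s, v s - u⟫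
      ≤ ∑ s ∈ Finset.range S, (bregmanDiv ω (v s) u - bregmanDiv ω (v (s + 1)) u
          + dualNorm N (ζ s) ^ 2 / (2 * η)) := Finset.sum_le_sum hstep
    _ = bregmanDiv ω (v 0) u - bregmanDiv ω (v S) u
          + 1 / (2 * η) * ∑ s ∈ Finset.range S, dualNorm N (ζ s) ^ 2 := by
      rw [Finset.sum_add_distrib, Finset.sum_range_sub', Finset.mul_sum]
      simp only [one_div_mul_eq_div]
    _ ≤ _ := by linarith

/-- Telescoping prox-mapping inequality (Lemma 6.1 of Nemirovski et al.): if each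
`v (s+1)` is the prox point `P_{v s}(ζ s)` for `s = 0, ..., S-1` (indices shifted from the
paper's `1, ..., S`), then for every `u ∈ X`,
`Σ_{s<S} ⟨ζ s, v s - u⟩ ≤ V (v 0) u + (1/(2η)) Σ_{s<S} N*(ζ s)²`. -/
theorem prox_mapping_telescoping_inequality
    {E : Type*} [NormedAddCommGroup E] [InnerProductSpace ℝ E] [FiniteDimensional ℝ E]
    (X : Set E) (hXne : X.Nonempty) (hXconv : Convex ℝ X)
    (N : E → ℝ)
    (hN_nonneg : ∀ x, 0 ≤ N x)
    (hN_eq_zero : ∀ x, N x = 0 ↔ x = 0)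
    (hN_smul : ∀ (c : ℝ) (x : E), N (c • x) = |c| * N x)
    (hN_add : ∀ x y, N (x + y) ≤ N x + N y)
    (Nstar : E → ℝ)
    (hNstar : ∀ y, Nstar y = sSup ((fun x => ⟪y, x⟫) '' {x : E | N x ≤ 1}))
    (ω : E → ℝ) (hω : Differentiable ℝ ω)
    (η : ℝ) (hη : 0 < η)
    (hstrong : ∀ x ∈ X, ∀ x' ∈ X,
      η * N (x' - x) ^ 2 ≤ ⟪gradient ω x' - gradient ω x, x' - x⟫)
    (V : E → E → ℝ)
    (hV : ∀ x u, V x u = ω u - ω x - ⟪gradient ω x, u - x⟫)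
    (S : ℕ) (ζ : ℕ → E) (v : ℕ → E)
    (hv0 : v 0 ∈ X)
    (hvmem : ∀ s < S, v (s + 1) ∈ X)
    (hprox : ∀ s < S, ∀ u ∈ X,
      ⟪ζ s, v (s + 1) - v s⟫ + V (v s) (v (s + 1)) ≤ ⟪ζ s, u - v s⟫ + V (v s) u) :
    ∀ u ∈ X,
      ∑ s ∈ Finset.range S, ⟪ζ s, v s - u⟫ ≤
        V (v 0) u + (1 / (2 * η)) * ∑ s ∈ Finset.range S, Nstar (ζ s) ^ 2 :=
  prox_mapping_telescoping_inequality_general X hXconv N hN_nonneg hN_eq_zero hN_smul hN_add Nstar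
    hNstar ω hω η hη hstrong V hV S ζ v hv0 hvmem hprox
end

section
/- Let g_1, ..., g_m ∈ ℝ^n, let C ⊆ ℝ^n be convex, and define φ(d, λ) = Σ_{i=1}^m λ_i ⟨g_i, d⟩ + (1/2)‖d‖₂² for d ∈ ℝ^n, λ ∈ Δ^m. Suppose (d_k, λ_k) ∈ C × Δ^m is a saddle point of φ on C × Δ^m, i.e., φ(d_k, λ) ≤ φ(d_k, λ_k) ≤ φ(d, λ_k) for all d ∈ C and λ ∈ Δ^m. Let P ≤ S be integers, let γ_s > 0 and (d_s, λ_s) ∈ C × Δ^m for s = P, ..., S, and set Γ = Σ_{s=P}^S γ_s, d̄ = Γ^{-1} Σ_{s=P}^S γ_s d_s. Then (1/2)‖d_k − d̄‖₂² ≤ Γ^{-1} Σ_{s=P}^S γ_s (φ(d_s, λ_k) − φ(d_k, λ_s)). -/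
open scoped RealInnerProductSpace

/-!
For fixed `λ_k`, completing the square gives `φ(d, λ_k) = ½‖d + G‖² - ½‖G‖²` with
`G = Σ_i λ_k,i g_i`, so the saddle inequality in `d` says that `d_k` is the projection of `-G`
onto `C`. The obtuse-angle criterion for projections then yields the quadratic growth
`φ(d_k, λ_k) + ½‖d - d_k‖² ≤ φ(d, λ_k)` on `C`, while the saddle inequality in `λ` gives
`φ(d_k, λ_s) ≤ φ(d_k, λ_k)`. Averaging `½‖d_k - d_s‖² ≤ φ(d_s, λ_k) - φ(d_k, λ_s)` with the
weights `γ_s` and applying Jensen's inequality to the convex function `½‖d_k - ·‖²` concludes.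
-/

section

variable {E : Type*} [NormedAddCommGroup E] [InnerProductSpace ℝ E]

theorem norm_sub_sq_add_norm_sub_sq_le_of_isMinOn {K : Set E} (hK : Convex ℝ K) {u x y : E}
    (hx : x ∈ K) (hmin : IsMinOn (fun w => ‖u - w‖) K x) (hy : y ∈ K) :
    ‖u - x‖ ^ 2 + ‖y - x‖ ^ 2 ≤ ‖u - y‖ ^ 2 := by
  have : Nonempty K := ⟨⟨x, hx⟩⟩
  have hproj : ‖u - x‖ = ⨅ w : K, ‖u - w‖ :=
    le_antisymm (le_ciInf fun w => isMinOn_iff.1 hmin w w.2)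
      (ciInf_le (f := fun w : K => ‖u - w‖)
        ⟨0, Set.forall_mem_range.2 fun _ => norm_nonneg _⟩ ⟨x, hx⟩)
  have hobtuse := (norm_eq_iInf_iff_real_inner_le_zero hK hx).1 hproj y hy
  have hsplit : u - y = (u - x) - (y - x) := by abel
  rw [hsplit, norm_sub_sq_real (u - x)]
  linarith

theorem inner_add_half_norm_sq_eq (v d : E) :
    ⟪v, d⟫ + 1 / 2 * ‖d‖ ^ 2 = 1 / 2 * ‖-v - d‖ ^ 2 - 1 / 2 * ‖v‖ ^ 2 := by
  rw [← neg_add', norm_neg, norm_add_sq_real]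
  ring

theorem IsMinOn.inner_add_half_norm_sq_add_le {K : Set E} (hK : Convex ℝ K) {v x y : E}
    (hx : x ∈ K) (hmin : IsMinOn (fun d => ⟪v, d⟫ + 1 / 2 * ‖d‖ ^ 2) K x) (hy : y ∈ K) :
    ⟪v, x⟫ + 1 / 2 * ‖x‖ ^ 2 + 1 / 2 * ‖y - x‖ ^ 2 ≤ ⟪v, y⟫ + 1 / 2 * ‖y‖ ^ 2 := by
  have hdist : IsMinOn (fun w => ‖-v - w‖) K x := isMinOn_iff.2 fun w hw => by
    have := isMinOn_iff.1 hmin w hw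
    simp only [inner_add_half_norm_sq_eq v] at this
    exact (pow_le_pow_iff_left₀ (norm_nonneg _) (norm_nonneg _) two_ne_zero).1 (by linarith)
  have := norm_sub_sq_add_norm_sub_sq_le_of_isMinOn hK hx hdist hy
  rw [inner_add_half_norm_sq_eq v x, inner_add_half_norm_sq_eq v y]
  linarith

theorem norm_sub_centerMass_sq_le {ι : Type*} {t : Finset ι} {w : ι → ℝ} {p : ι → E} (x : E)
    (hw₀ : ∀ i ∈ t, 0 ≤ w i) (hw : 0 < ∑ i ∈ t, w i) :
    ‖x - t.centerMass w p‖ ^ 2 ≤ t.centerMass w fun i => ‖x - p i‖ ^ 2 := by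
  have hconv : ConvexOn ℝ Set.univ fun z : E => ‖x - z‖ ^ 2 :=
    ((convexOn_univ_dist x).pow (fun _ _ => dist_nonneg) 2).congr fun z _ => by
      rw [Pi.pow_apply, dist_comm, dist_eq_norm]
  exact hconv.map_centerMass_le hw₀ hw fun _ _ => Set.mem_univ _

end

/-- Deterministic core of Theorem 4.1: if `(d_k, λ_k)` is a saddle point of the MGDA
Lagrangian `φ(d, λ) = Σ_i λ_i ⟨g i, d⟩ + (1/2)‖d‖²` on `C × Δ^m`, and `d̄` is the
`γ`-weighted average of points `d_s ∈ C`, `s = P, ..., S`, then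
`(1/2)‖d_k - d̄‖² ≤ Γ⁻¹ Σ_s γ_s (φ(d_s, λ_k) - φ(d_k, λ_s))`. -/
theorem weighted_average_gap_bound
    {n m : ℕ}
    (g : Fin m → EuclideanSpace ℝ (Fin n))
    (C : Set (EuclideanSpace ℝ (Fin n))) (hC : Convex ℝ C)
    (φ : EuclideanSpace ℝ (Fin n) → (Fin m → ℝ) → ℝ)
    (hφ : ∀ d lam, φ d lam = (∑ i, lam i * ⟪g i, d⟫) + (1 / 2) * ‖d‖ ^ 2)
    (dk : EuclideanSpace ℝ (Fin n)) (lamk : Fin m → ℝ)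
    (hdk : dk ∈ C) (hlamk : lamk ∈ stdSimplex ℝ (Fin m))
    (hsaddle : ∀ d ∈ C, ∀ lam ∈ stdSimplex ℝ (Fin m),
      φ dk lam ≤ φ dk lamk ∧ φ dk lamk ≤ φ d lamk)
    (P S : ℕ) (hPS : P ≤ S)
    (γ : ℕ → ℝ) (hγ : ∀ s ∈ Finset.Icc P S, 0 < γ s)
    (ds : ℕ → EuclideanSpace ℝ (Fin n)) (lams : ℕ → Fin m → ℝ)
    (hds : ∀ s ∈ Finset.Icc P S, ds s ∈ C)
    (hlams : ∀ s ∈ Finset.Icc P S, lams s ∈ stdSimplex ℝ (Fin m))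
    (Γ : ℝ) (hΓ : Γ = ∑ s ∈ Finset.Icc P S, γ s)
    (dbar : EuclideanSpace ℝ (Fin n))
    (hdbar : dbar = Γ⁻¹ • ∑ s ∈ Finset.Icc P S, γ s • ds s) :
    (1 / 2) * ‖dk - dbar‖ ^ 2 ≤
      Γ⁻¹ * ∑ s ∈ Finset.Icc P S, γ s * (φ (ds s) lamk - φ dk (lams s)) := by
  set G := ∑ i, lamk i • g i
  have hφk : ∀ d, φ d lamk = ⟪G, d⟫ + 1 / 2 * ‖d‖ ^ 2 := fun d => by
    simp only [hφ, G, sum_inner, real_inner_smul_left]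
  have hmin : IsMinOn (fun d => ⟪G, d⟫ + 1 / 2 * ‖d‖ ^ 2) C dk := isMinOn_iff.2 fun d hd => by
    simpa only [hφk] using (hsaddle d hd lamk hlamk).2
  have hstep : ∀ s ∈ Finset.Icc P S,
      1 / 2 * ‖dk - ds s‖ ^ 2 ≤ φ (ds s) lamk - φ dk (lams s) := fun s hs => by
    have hgrowth := hmin.inner_add_half_norm_sq_add_le hC hdk (hds s hs)
    have hmax := (hsaddle dk hdk (lams s) (hlams s hs)).1
    rw [hφk] at hmax ⊢
    rw [norm_sub_rev]
    linarith
  have hΓpos : 0 < Γ := hΓ ▸ Finset.sum_pos hγ ⟨P, Finset.mem_Icc.2 ⟨le_rfl, hPS⟩⟩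
  have hγ₀ : ∀ s ∈ Finset.Icc P S, 0 ≤ γ s := fun s hs => (hγ s hs).le
  have hjensen := norm_sub_centerMass_sq_le (p := ds) dk hγ₀ (hΓ ▸ hΓpos)
  rw [Finset.centerMass, Finset.centerMass, ← hΓ, ← hdbar] at hjensen
  simp only [smul_eq_mul] at hjensen
  calc 1 / 2 * ‖dk - dbar‖ ^ 2
      ≤ 1 / 2 * (Γ⁻¹ * ∑ s ∈ Finset.Icc P S, γ s * ‖dk - ds s‖ ^ 2) := by gcongr
    _ = Γ⁻¹ * ∑ s ∈ Finset.Icc P S, γ s * (1 / 2 * ‖dk - ds s‖ ^ 2) := by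
        rw [mul_left_comm, Finset.mul_sum]
        exact congrArg _ (Finset.sum_congr rfl fun s _ => by ring)
    _ ≤ Γ⁻¹ * ∑ s ∈ Finset.Icc P S, γ s * (φ (ds s) lamk - φ dk (lams s)) := by
        gcongr with s hs
        · exact hγ₀ s hs
        · exact hstep s hs
end

section
/- Let f_1, ..., f_m : ℝ^n → ℝ be differentiable with L-Lipschitz gradients (L > 0). Let x ∈ ℝ^n and suppose d* ∈ ℝ^n satisfies max_{i ∈ [m]} ⟨∇f_i(x), d*⟩ + (1/2)‖d*‖₂² ≤ 0. Let u ∈ ℝ^n, α > 0, and x' = x + α u. Then for every j ∈ [m]: f_j(x') ≤ f_j(x) − (α/2)‖d*‖₂² + L α² ‖d*‖₂² + L α² ‖u − d*‖₂² + α · max_{i ∈ [m]} ⟨∇f_i(x), u − d*⟩. -/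
/-!
Apply the descent lemma `f (x + v) ≤ f x + ⟪∇f x, v⟫ + (L/2)‖v‖²` to `v = α u` and split
`u = d* + (u - d*)`. The linear term then contributes `α ⟪∇f_j x, d*⟫ ≤ -(α/2)‖d*‖²` and
`α ⟪∇f_j x, u - d*⟫ ≤ α max_i ⟪∇f_i x, u - d*⟫`, while `‖u‖² ≤ 2‖d*‖² + 2‖u - d*‖²` by the
parallelogram law bounds the quadratic term.
-/

open scoped RealInnerProductSpace

section DescentLemma

variable {F : Type*} [NormedAddCommGroup F] [InnerProductSpace ℝ F] [CompleteSpace F]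
  {f : F → ℝ} {L : ℝ}

theorem hasDerivAt_comp_add_smul_s10 (hf : Differentiable ℝ f) (x v : F) (t : ℝ) :
    HasDerivAt (fun s : ℝ => f (x + s • v)) ⟪gradient f (x + t • v), v⟫ t := by
  have hline : HasDerivAt (fun s : ℝ => x + s • v) v t := by
    simpa using ((hasDerivAt_id t).smul_const v).const_add x
  have := (hf (x + t • v)).hasGradientAt.hasFDerivAt.comp_hasDerivAt t hline
  rwa [InnerProductSpace.toDual_apply_apply] at this

theorem inner_gradient_add_smul_sub_le
    (hlip : ∀ a b, ‖gradient f a - gradient f b‖ ≤ L * ‖a - b‖) (x v : F) {t : ℝ} (ht : 0 ≤ t) :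
    ⟪gradient f (x + t • v) - gradient f x, v⟫ ≤ L * t * ‖v‖ ^ 2 :=
  calc ⟪gradient f (x + t • v) - gradient f x, v⟫
      ≤ ‖gradient f (x + t • v) - gradient f x‖ * ‖v‖ := real_inner_le_norm _ _
    _ ≤ L * ‖t • v‖ * ‖v‖ := by
        gcongr
        simpa using hlip (x + t • v) x
    _ = L * t * ‖v‖ ^ 2 := by rw [norm_smul, Real.norm_of_nonneg ht]; ring

theorem le_add_inner_gradient_add_sq_norm (hf : Differentiable ℝ f)
    (hlip : ∀ a b, ‖gradient f a - gradient f b‖ ≤ L * ‖a - b‖) (x v : F) :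
    f (x + v) ≤ f x + ⟪gradient f x, v⟫ + L / 2 * ‖v‖ ^ 2 := by
  -- the gap between `f` and its quadratic upper model along the segment is antitone
  set φ : ℝ → ℝ := fun t => f (x + t • v) - t * ⟪gradient f x, v⟫ - L / 2 * t ^ 2 * ‖v‖ ^ 2
  have hφ : ∀ t, HasDerivAt φ
      (⟪gradient f (x + t • v), v⟫ - ⟪gradient f x, v⟫ - L * t * ‖v‖ ^ 2) t := by
    intro t
    refine (((hasDerivAt_comp_add_smul_s10 hf x v t).sub
      ((hasDerivAt_id t).mul_const ⟪gradient f x, v⟫)).sub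
      (((hasDerivAt_pow 2 t).const_mul (L / 2)).mul_const (‖v‖ ^ 2))).congr_deriv ?_
    ring
  have hanti : AntitoneOn φ (Set.Ici 0) := by
    refine antitoneOn_of_hasDerivWithinAt_nonpos (convex_Ici 0)
      (fun t _ => (hφ t).continuousAt.continuousWithinAt)
      (fun t _ => (hφ t).hasDerivWithinAt) fun t ht => ?_
    rw [interior_Ici] at ht
    have := inner_gradient_add_smul_sub_le hlip x v ht.le
    rw [inner_sub_left] at this
    linarith
  have := hanti Set.self_mem_Ici (Set.mem_Ici.mpr zero_le_one) zero_le_one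
  simp only [φ, zero_smul, add_zero, zero_mul, sub_zero, one_smul, one_mul, one_pow,
    zero_pow two_ne_zero, mul_zero] at this
  linarith

theorem apply_add_smul_le_split (hf : Differentiable ℝ f)
    (hL : 0 ≤ L) (hlip : ∀ a b, ‖gradient f a - gradient f b‖ ≤ L * ‖a - b‖)
    (x d u : F) (α : ℝ) :
    f (x + α • u) ≤ f x + α * ⟪gradient f x, d⟫ + α * ⟪gradient f x, u - d⟫
      + L * α ^ 2 * ‖d‖ ^ 2 + L * α ^ 2 * ‖u - d‖ ^ 2 := by
  have hdescent := le_add_inner_gradient_add_sq_norm hf hlip x (α • u)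
  have hinner : ⟪gradient f x, α • u⟫ = α * ⟪gradient f x, d⟫ + α * ⟪gradient f x, u - d⟫ := by
    rw [real_inner_smul_right, ← mul_add, ← inner_add_right, add_sub_cancel]
  have hnorm : ‖u‖ ^ 2 ≤ 2 * (‖d‖ ^ 2 + ‖u - d‖ ^ 2) := by
    have := parallelogram_law_with_norm ℝ d (u - d)
    rw [add_sub_cancel] at this
    linarith [sq_nonneg ‖d - (u - d)‖]
  have hquad : L / 2 * ‖α • u‖ ^ 2 ≤ L * α ^ 2 * ‖d‖ ^ 2 + L * α ^ 2 * ‖u - d‖ ^ 2 := by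
    rw [norm_smul, mul_pow, Real.norm_eq_abs, sq_abs]
    nlinarith [mul_le_mul_of_nonneg_left hnorm (by positivity : 0 ≤ L / 2 * α ^ 2)]
  linarith

end DescentLemma

/-- One-step descent inequality: if the objectives have `L`-Lipschitz gradients, `d*`
satisfies `max_i ⟨∇f_i(x), d*⟩ + (1/2)‖d*‖² ≤ 0`, and `x' = x + α u`, then for every `j`,
`f j x' ≤ f j x - (α/2)‖d*‖² + Lα²‖d*‖² + Lα²‖u - d*‖² + α max_i ⟨∇f_i(x), u - d*⟩`. -/
theorem descent_step_inequality
    {n m : ℕ} (hm : 1 ≤ m)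
    (f : Fin m → EuclideanSpace ℝ (Fin n) → ℝ)
    (hf : ∀ i, Differentiable ℝ (f i))
    (L : ℝ) (hL : 0 < L)
    (hlip : ∀ (i : Fin m) (x y : EuclideanSpace ℝ (Fin n)),
      ‖gradient (f i) x - gradient (f i) y‖ ≤ L * ‖x - y‖)
    (x dstar u : EuclideanSpace ℝ (Fin n)) (α : ℝ) (hα : 0 < α)
    (hdstar : Finset.univ.sup'
        (Finset.univ_nonempty_iff.mpr (Fin.pos_iff_nonempty.mp (by omega)))
        (fun i => ⟪gradient (f i) x, dstar⟫) + (1 / 2) * ‖dstar‖ ^ 2 ≤ 0)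
    (x' : EuclideanSpace ℝ (Fin n)) (hx' : x' = x + α • u) :
    ∀ j : Fin m,
      f j x' ≤ f j x - (α / 2) * ‖dstar‖ ^ 2 + L * α ^ 2 * ‖dstar‖ ^ 2
        + L * α ^ 2 * ‖u - dstar‖ ^ 2
        + α * Finset.univ.sup'
            (Finset.univ_nonempty_iff.mpr (Fin.pos_iff_nonempty.mp (by omega)))
            (fun i => ⟪gradient (f i) x, u - dstar⟫) := by
  intro j
  subst hx'
  have hd : ⟪gradient (f j) x, dstar⟫ ≤ -(1 / 2) * ‖dstar‖ ^ 2 :=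
    (Finset.le_sup' (fun i => ⟪gradient (f i) x, dstar⟫) (Finset.mem_univ j)).trans
      (by linarith)
  have hud := Finset.le_sup' (fun i => ⟪gradient (f i) x, u - dstar⟫) (Finset.mem_univ j)
  have := apply_add_smul_le_split (hf j) hL.le (hlip j) x dstar u α
  linarith [mul_le_mul_of_nonneg_left hd hα.le, mul_le_mul_of_nonneg_left hud hα.le]
end

section
/- Let K ≥ 1 be an integer, L > 0, 0 < α ≤ 1/(4L), and C_f, M₁, M_f ≥ 0. Let e_0, ..., e_{K−1} ≥ 0 and β_0, ..., β_{K−1} ≥ 0 satisfy β_k ≤ M₁/(K+1) for all k and Σ_{k=0}^{K−1} (α/2 − Lα²) e_k ≤ Σ_{k=0}^{K−1} ( α C_f √(β_k) + L α² β_k ) + M_f. Then (1/K) Σ_{k=0}^{K−1} e_k ≤ 4 C_f √(M₁) · K^{−1/2} + 4 L α M₁ · K^{−1} + 4 M_f/(α K). -/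
/-!
Since `L α ≤ 1/4`, the weight `α/2 - L α²` in front of each `e k` is at least `α/4`, while
`β k ≤ M₁/(K+1) ≤ M₁/K` bounds every error term by `α C_f √(M₁/K) + L α² M₁/K`. Summing over
`K` steps and dividing by `α K / 4` gives the rate.
-/

open Finset

theorem quarter_le_sub_mul_sq {L α : ℝ} (hL : 0 < L) (hα0 : 0 ≤ α) (hα : α ≤ 1 / (4 * L)) :
    α / 4 ≤ α / 2 - L * α ^ 2 := by
  have hLα : L * α ≤ 1 / 4 := by
    rw [le_div_iff₀ (by positivity)] at hα
    linarith
  nlinarith [mul_nonneg hα0 (sub_nonneg.2 hLα)]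

theorem one_div_mul_le_of_mul_le_mul_add {n c S R M : ℝ} (hn : 0 < n) (hc : 0 < c)
    (h : c * S ≤ n * R + M) :
    1 / n * S ≤ R / c + M / (c * n) := by
  rw [div_add_div _ _ hc.ne' (by positivity), one_div_mul_eq_div,
    div_le_div_iff₀ hn (by positivity)]
  nlinarith [mul_le_mul_of_nonneg_left h (by positivity : 0 ≤ c * n)]

theorem msmd_rate_fixed_inner_fixed_outer_general
    (K : ℕ) (hK : 1 ≤ K)
    (L α Cf M₁ Mf : ℝ)
    (hL : 0 < L) (hα0 : 0 < α) (hα : α ≤ 1 / (4 * L))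
    (hCf : 0 ≤ Cf) (hM₁ : 0 ≤ M₁)
    (e β : ℕ → ℝ)
    (he : ∀ k < K, 0 ≤ e k)
    (hβ : ∀ k < K, β k ≤ M₁ / (K + 1))
    (hsum : ∑ k ∈ Finset.range K, (α / 2 - L * α ^ 2) * e k ≤
      (∑ k ∈ Finset.range K, (α * Cf * Real.sqrt (β k) + L * α ^ 2 * β k)) + Mf) :
    (1 / K) * ∑ k ∈ Finset.range K, e k ≤
      4 * Cf * Real.sqrt M₁ / Real.sqrt K + 4 * L * α * M₁ / K + 4 * Mf / (α * K) := by
  have hKpos : (0 : ℝ) < K := by exact_mod_cast hK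
  have hβK : ∀ k < K, β k ≤ M₁ / K := fun k hk =>
    (hβ k hk).trans (div_le_div_of_nonneg_left hM₁ hKpos (by linarith))
  have hweighted : α / 4 * ∑ k ∈ range K, e k ≤
      K * (α * Cf * √(M₁ / K) + L * α ^ 2 * (M₁ / K)) + Mf := by
    calc α / 4 * ∑ k ∈ range K, e k = ∑ k ∈ range K, α / 4 * e k := mul_sum _ _ _
      _ ≤ ∑ k ∈ range K, (α / 2 - L * α ^ 2) * e k := sum_le_sum fun k hk =>
          mul_le_mul_of_nonneg_right (quarter_le_sub_mul_sq hL hα0.le hα) (he k (mem_range.1 hk))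
      _ ≤ (∑ k ∈ range K, (α * Cf * √(β k) + L * α ^ 2 * β k)) + Mf := hsum
      _ ≤ (∑ _k ∈ range K, (α * Cf * √(M₁ / K) + L * α ^ 2 * (M₁ / K))) + Mf := by
          gcongr with k hk <;> exact hβK k (mem_range.1 hk)
      _ = _ := by rw [sum_const, card_range, nsmul_eq_mul]
  calc 1 / K * ∑ k ∈ range K, e k
      ≤ (α * Cf * √(M₁ / K) + L * α ^ 2 * (M₁ / K)) / (α / 4) + Mf / (α / 4 * K) :=
        one_div_mul_le_of_mul_le_mul_add hKpos (by positivity) hweighted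
    _ = _ := by
        rw [Real.sqrt_div' _ hKpos.le]
        field_simp

/-- Deterministic form of Corollary 4.1(a): with fixed outer step `α ≤ 1/(4L)` and
inner-iteration error bounds `β k ≤ M₁/(K+1)` (from `S = (K+1)²` inner steps),
the averaged quantities `e k` satisfy
`(1/K) Σ e_k ≤ 4 C_f √M₁ / √K + 4 L α M₁ / K + 4 M_f/(α K)`. -/
theorem msmd_rate_fixed_inner_fixed_outer
    (K : ℕ) (hK : 1 ≤ K)
    (L α Cf M₁ Mf : ℝ)
    (hL : 0 < L) (hα0 : 0 < α) (hα : α ≤ 1 / (4 * L))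
    (hCf : 0 ≤ Cf) (hM₁ : 0 ≤ M₁) (hMf : 0 ≤ Mf)
    (e β : ℕ → ℝ)
    (he : ∀ k < K, 0 ≤ e k) (hβ0 : ∀ k < K, 0 ≤ β k)
    (hβ : ∀ k < K, β k ≤ M₁ / (K + 1))
    (hsum : ∑ k ∈ Finset.range K, (α / 2 - L * α ^ 2) * e k ≤
      (∑ k ∈ Finset.range K, (α * Cf * Real.sqrt (β k) + L * α ^ 2 * β k)) + Mf) :
    (1 / K) * ∑ k ∈ Finset.range K, e k ≤
      4 * Cf * Real.sqrt M₁ / Real.sqrt K + 4 * L * α * M₁ / K + 4 * Mf / (α * K) :=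
  msmd_rate_fixed_inner_fixed_outer_general K hK L α Cf M₁ Mf hL hα0 hα hCf hM₁ e β he hβ hsum
end

section
/- Let K ≥ 1 be an integer, L > 0, ρ > 0, m ≥ 1, and C_f, M₁, M_f ≥ 0. Set α_k = ρ/(k+1) for k = 0, ..., K−1 and A = Σ_{k=0}^{K−1} α_k. Let e_0, ..., e_{K−1} ≥ 0 with e_k ≤ m C_f² for all k, and β_0, ..., β_{K−1} ≥ 0 with β_k ≤ M₁/(K+1) for all k, and suppose Σ_{k=0}^{K−1} (α_k/2 − L α_k²) e_k ≤ Σ_{k=0}^{K−1} ( α_k C_f √(β_k) + L α_k² β_k ) + M_f. Then (1/A) Σ_{k=0}^{K−1} α_k e_k ≤ L m C_f² ρ π²/(3 ln(K+1)) + 2 C_f √(M₁)/√(K+1) + L ρ M₁ π²/(3 (K+1) ln(K+1)) + 2 M_f/(ρ ln(K+1)). -/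
/-!
Writing `α e = 2 (α/2 - L α²) e + 2 L α² e`, the descent inequality and the bounds on `e` and `β`
give `Σ α e ≤ 2 L (m C_f² + M₁/(K+1)) Σ α² + 2 C_f √(M₁/(K+1)) Σ α + 2 M_f`. For `α_k = ρ/(k+1)`
the Basel sum bounds `Σ α²` by `ρ² π²/6`, and comparing the harmonic sum with the logarithm bounds
`A = Σ α` below by `ρ ln(K+1)`; dividing by `A` gives the rate.
-/

open Finset Real

lemma sum_range_one_div_succ_sq_le_pi_sq_div_six (K : ℕ) :
    ∑ k ∈ range K, 1 / ((k : ℝ) + 1) ^ 2 ≤ π ^ 2 / 6 := by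
  have hshift : ∑ k ∈ range K, 1 / ((k : ℝ) + 1) ^ 2 = ∑ n ∈ range (K + 1), 1 / (n : ℝ) ^ 2 := by
    rw [sum_range_succ']
    simp
  rw [hshift]
  exact sum_le_hasSum _ (fun n _ => by positivity) hasSum_zeta_two

lemma log_succ_le_sum_range_one_div_succ (K : ℕ) :
    log (K + 1) ≤ ∑ k ∈ range K, 1 / ((k : ℝ) + 1) := by
  simpa [harmonic] using log_add_one_le_harmonic K

lemma sum_mul_le_of_descent {ι : Type*} (s : Finset ι) {L Cf E B Mf : ℝ} (hL : 0 ≤ L)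
    (hCf : 0 ≤ Cf) {α e β : ι → ℝ} (hα : ∀ k ∈ s, 0 ≤ α k) (he : ∀ k ∈ s, e k ≤ E)
    (hβ : ∀ k ∈ s, β k ≤ B)
    (hsum : ∑ k ∈ s, (α k / 2 - L * α k ^ 2) * e k ≤
      (∑ k ∈ s, (α k * Cf * √(β k) + L * α k ^ 2 * β k)) + Mf) :
    ∑ k ∈ s, α k * e k ≤
      2 * L * (E + B) * ∑ k ∈ s, α k ^ 2 + 2 * Cf * √B * ∑ k ∈ s, α k + 2 * Mf := by
  have hsplit : ∑ k ∈ s, α k * e k ≤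
      2 * ∑ k ∈ s, (α k / 2 - L * α k ^ 2) * e k + 2 * L * E * ∑ k ∈ s, α k ^ 2 := by
    rw [mul_sum, mul_sum, ← sum_add_distrib]
    gcongr with k hk
    nlinarith [he k hk, mul_nonneg hL (sq_nonneg (α k))]
  have hnoise : ∑ k ∈ s, (α k * Cf * √(β k) + L * α k ^ 2 * β k) ≤
      Cf * √B * ∑ k ∈ s, α k + L * B * ∑ k ∈ s, α k ^ 2 := by
    rw [mul_sum, mul_sum, ← sum_add_distrib]
    refine sum_le_sum fun k hk => ?_
    have hsqrt : √(β k) ≤ √B := sqrt_le_sqrt (hβ k hk)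
    nlinarith [mul_le_mul_of_nonneg_left hsqrt (mul_nonneg (hα k hk) hCf),
      mul_le_mul_of_nonneg_left (hβ k hk) (mul_nonneg hL (sq_nonneg (α k)))]
  linarith

lemma div_le_div_add_of_le_add_mul {S P c A a : ℝ} (hS : S ≤ P + c * A) (hP : 0 ≤ P)
    (ha : 0 < a) (haA : a ≤ A) : S / A ≤ P / a + c := by
  have hA : 0 < A := ha.trans_le haA
  calc S / A ≤ (P + c * A) / A := by gcongr
    _ = P / A + c := by field_simp
    _ ≤ P / a + c := by gcongr

theorem msmd_rate_fixed_inner_varying_outer_general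
    (K : ℕ) (hK : 1 ≤ K) (m : ℕ)
    (L ρ Cf M₁ Mf : ℝ)
    (hL : 0 < L) (hρ : 0 < ρ)
    (hCf : 0 ≤ Cf) (hM₁ : 0 ≤ M₁) (hMf : 0 ≤ Mf)
    (α : ℕ → ℝ) (hα : ∀ k, α k = ρ / (k + 1))
    (A : ℝ) (hA : A = ∑ k ∈ Finset.range K, α k)
    (e β : ℕ → ℝ)
    (heb : ∀ k < K, e k ≤ m * Cf ^ 2)
    (hβ : ∀ k < K, β k ≤ M₁ / (K + 1))
    (hsum : ∑ k ∈ Finset.range K, (α k / 2 - L * α k ^ 2) * e k ≤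
      (∑ k ∈ Finset.range K, (α k * Cf * Real.sqrt (β k) + L * α k ^ 2 * β k)) + Mf) :
    (1 / A) * ∑ k ∈ Finset.range K, α k * e k ≤
      L * m * Cf ^ 2 * ρ * Real.pi ^ 2 / (3 * Real.log (K + 1))
        + 2 * Cf * Real.sqrt M₁ / Real.sqrt (K + 1)
        + L * ρ * M₁ * Real.pi ^ 2 / (3 * (K + 1) * Real.log (K + 1))
        + 2 * Mf / (ρ * Real.log (K + 1)) := by
  have hlog : 0 < log (K + 1) := log_pos (by norm_cast; omega)
  have hAlog : ρ * log (K + 1) ≤ A := by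
    calc ρ * log (K + 1) ≤ ρ * ∑ k ∈ range K, 1 / ((k : ℝ) + 1) :=
          mul_le_mul_of_nonneg_left (log_succ_le_sum_range_one_div_succ K) hρ.le
      _ = A := by rw [hA, mul_sum]; simp only [hα, mul_one_div]
  have hsq : ∑ k ∈ range K, α k ^ 2 ≤ ρ ^ 2 * (π ^ 2 / 6) :=
    calc ∑ k ∈ range K, α k ^ 2 = ρ ^ 2 * ∑ k ∈ range K, 1 / ((k : ℝ) + 1) ^ 2 := by
          rw [mul_sum]; simp only [hα, div_pow, mul_one_div]
      _ ≤ ρ ^ 2 * (π ^ 2 / 6) := by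
          gcongr; exact sum_range_one_div_succ_sq_le_pi_sq_div_six K
  have hdescent := sum_mul_le_of_descent (range K) hL.le hCf
    (fun k _ => by rw [hα k]; positivity) (fun k hk => heb k (mem_range.mp hk))
    (fun k hk => hβ k (mem_range.mp hk)) hsum
  rw [← hA] at hdescent
  have hbound : ∑ k ∈ range K, α k * e k ≤
      (2 * L * (m * Cf ^ 2 + M₁ / (K + 1)) * (ρ ^ 2 * (π ^ 2 / 6)) + 2 * Mf)
        + 2 * Cf * √(M₁ / (K + 1)) * A := by
    have hcoef : 0 ≤ 2 * L * (m * Cf ^ 2 + M₁ / (K + 1)) := by positivity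
    linarith [mul_le_mul_of_nonneg_left hsq hcoef]
  rw [one_div_mul_eq_div]
  refine (div_le_div_add_of_le_add_mul hbound (by positivity) (by positivity) hAlog).trans_eq ?_
  rw [sqrt_div hM₁]
  field_simp
  ring

/-- Deterministic form of Corollary 4.3(a): with diminishing outer steps
`α k = ρ/(k+1)`, `A = Σ α_k`, bounds `e k ≤ m C_f²` and `β k ≤ M₁/(K+1)`
(from `S = (K+1)²` inner steps), one has
`(1/A) Σ α_k e_k ≤ L m C_f² ρ π²/(3 ln(K+1)) + 2 C_f √M₁/√(K+1)
  + L ρ M₁ π²/(3(K+1) ln(K+1)) + 2 M_f/(ρ ln(K+1))`. -/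
theorem msmd_rate_fixed_inner_varying_outer
    (K : ℕ) (hK : 1 ≤ K) (m : ℕ) (hm : 1 ≤ m)
    (L ρ Cf M₁ Mf : ℝ)
    (hL : 0 < L) (hρ : 0 < ρ)
    (hCf : 0 ≤ Cf) (hM₁ : 0 ≤ M₁) (hMf : 0 ≤ Mf)
    (α : ℕ → ℝ) (hα : ∀ k, α k = ρ / (k + 1))
    (A : ℝ) (hA : A = ∑ k ∈ Finset.range K, α k)
    (e β : ℕ → ℝ)
    (he0 : ∀ k < K, 0 ≤ e k) (heb : ∀ k < K, e k ≤ m * Cf ^ 2)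
    (hβ0 : ∀ k < K, 0 ≤ β k) (hβ : ∀ k < K, β k ≤ M₁ / (K + 1))
    (hsum : ∑ k ∈ Finset.range K, (α k / 2 - L * α k ^ 2) * e k ≤
      (∑ k ∈ Finset.range K, (α k * Cf * Real.sqrt (β k) + L * α k ^ 2 * β k)) + Mf) :
    (1 / A) * ∑ k ∈ Finset.range K, α k * e k ≤
      L * m * Cf ^ 2 * ρ * Real.pi ^ 2 / (3 * Real.log (K + 1))
        + 2 * Cf * Real.sqrt M₁ / Real.sqrt (K + 1)
        + L * ρ * M₁ * Real.pi ^ 2 / (3 * (K + 1) * Real.log (K + 1))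
        + 2 * Mf / (ρ * Real.log (K + 1)) :=
  msmd_rate_fixed_inner_varying_outer_general K hK m L ρ Cf M₁ Mf hL hρ hCf hM₁ hMf α hα A hA e β
    heb hβ hsum
end

section
/- Let K ≥ 1 be an integer, L > 0, 0 < α ≤ 1/(4L), and C_f, C_g, μ₀, M₀, M_{0,f} ≥ 0. Let e_0, ..., e_{K−1} ≥ 0 and β_0, ..., β_{K−1} ≥ 0 satisfy β_k ≤ M₀/K for all k and Σ_{k=0}^{K−1} (α/2 − Lα²) e_k ≤ Σ_{k=0}^{K−1} ( α √(2 (C_f² + μ₀² C_g²) β_k) + L α² β_k ) + M_{0,f}. Then (1/K) Σ_{k=0}^{K−1} e_k ≤ 4 √(2 M₀ (C_f² + μ₀² C_g²)) · K^{−1/2} + 4 α L M₀ · K^{−1} + 4 M_{0,f}/(K α). -/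
/-!
The coefficient `α/2 - Lα²` is at least `α/4` once `α ≤ 1/(4L)`, so the hypothesis bounds
`(α/4) Σ e_k`. Each error term is maximal at `β_k = M₀/K`, where `√(2 C β_k) ≤ √(2 M₀ C)/√K`;
summing over the `K` indices and dividing by `α K / 4` gives the three rates.
-/

open Finset

lemma quarter_le_half_sub_mul_sq {L α : ℝ} (hL : 0 < L) (hα0 : 0 < α) (hα : α ≤ 1 / (4 * L)) :
    α / 4 ≤ α / 2 - L * α ^ 2 := by
  have hLα : L * α ≤ 1 / 4 := by
    rw [le_div_iff₀ (by positivity)] at hα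
    linarith
  nlinarith

lemma average_le_of_weighted_sum_le {K : ℕ} (hK : 0 < K) {c M B : ℝ} (hc : 0 < c)
    {a b e : ℕ → ℝ} (ha : ∀ k < K, c ≤ a k) (he : ∀ k < K, 0 ≤ e k) (hb : ∀ k < K, b k ≤ B)
    (hsum : ∑ k ∈ range K, a k * e k ≤ ∑ k ∈ range K, b k + M) :
    (1 / K) * ∑ k ∈ range K, e k ≤ (B + M / K) / c := by
  have hKpos : (0 : ℝ) < K := Nat.cast_pos.mpr hK
  have hlow : c * ∑ k ∈ range K, e k ≤ ∑ k ∈ range K, a k * e k := by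
    rw [mul_sum]
    exact sum_le_sum fun k hk ↦
      mul_le_mul_of_nonneg_right (ha k (mem_range.mp hk)) (he k (mem_range.mp hk))
  have hup : ∑ k ∈ range K, b k ≤ K * B := by
    simpa using sum_le_card_nsmul (range K) b B fun k hk ↦ hb k (mem_range.mp hk)
  rw [le_div_iff₀ hc]
  calc (1 / K * ∑ k ∈ range K, e k) * c = (c * ∑ k ∈ range K, e k) / K := by ring
    _ ≤ (K * B + M) / K := by gcongr; linarith
    _ = B + M / K := by field_simp

lemma sqrt_mul_le_sqrt_mul_div_sqrt {c β M K : ℝ} (hc : 0 ≤ c) (hK : 0 ≤ K) (hβ : β ≤ M / K) :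
    Real.sqrt (c * β) ≤ Real.sqrt (c * M) / Real.sqrt K := by
  rw [← Real.sqrt_div' _ hK, mul_div_assoc]
  exact Real.sqrt_le_sqrt (mul_le_mul_of_nonneg_left hβ hc)

theorem msmd_preference_rate_fixed_steps_general
    (K : ℕ) (hK : 1 ≤ K)
    (L α Cf Cg μ₀ M₀ M₀f : ℝ)
    (hL : 0 < L) (hα0 : 0 < α) (hα : α ≤ 1 / (4 * L))
    (e β : ℕ → ℝ)
    (he : ∀ k < K, 0 ≤ e k)
    (hβ : ∀ k < K, β k ≤ M₀ / K)
    (hsum : ∑ k ∈ Finset.range K, (α / 2 - L * α ^ 2) * e k ≤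
      (∑ k ∈ Finset.range K,
        (α * Real.sqrt (2 * (Cf ^ 2 + μ₀ ^ 2 * Cg ^ 2) * β k) + L * α ^ 2 * β k)) + M₀f) :
    (1 / K) * ∑ k ∈ Finset.range K, e k ≤
      4 * Real.sqrt (2 * M₀ * (Cf ^ 2 + μ₀ ^ 2 * Cg ^ 2)) / Real.sqrt K
        + 4 * α * L * M₀ / K + 4 * M₀f / (K * α) := by
  set C := 2 * (Cf ^ 2 + μ₀ ^ 2 * Cg ^ 2)
  have hterm : ∀ k < K, α * Real.sqrt (C * β k) + L * α ^ 2 * β k ≤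
      α * (Real.sqrt (C * M₀) / Real.sqrt K) + L * α ^ 2 * (M₀ / K) := fun k hk ↦
    add_le_add (mul_le_mul_of_nonneg_left
      (sqrt_mul_le_sqrt_mul_div_sqrt (by positivity) K.cast_nonneg (hβ k hk)) hα0.le)
      (mul_le_mul_of_nonneg_left (hβ k hk) (by positivity))
  have havg := average_le_of_weighted_sum_le hK (by positivity : 0 < α / 4)
    (fun k _ ↦ quarter_le_half_sub_mul_sq hL hα0 hα) he hterm hsum
  convert havg using 1
  rw [show 2 * M₀ * (Cf ^ 2 + μ₀ ^ 2 * Cg ^ 2) = C * M₀ by ring]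
  field_simp

/-- Deterministic form of Theorem 5.1 (SMOO with preferences): with fixed outer step
`α ≤ 1/(4L)` and inner error bounds `β k ≤ M₀/K` (from `S = K²` inner steps),
`(1/K) Σ e_k ≤ 4 √(2 M₀ (C_f² + μ₀² C_g²)) / √K + 4 α L M₀ / K + 4 M_{0,f}/(K α)`. -/
theorem msmd_preference_rate_fixed_steps
    (K : ℕ) (hK : 1 ≤ K)
    (L α Cf Cg μ₀ M₀ M₀f : ℝ)
    (hL : 0 < L) (hα0 : 0 < α) (hα : α ≤ 1 / (4 * L))
    (hCf : 0 ≤ Cf) (hCg : 0 ≤ Cg) (hμ₀ : 0 ≤ μ₀) (hM₀ : 0 ≤ M₀) (hM₀f : 0 ≤ M₀f)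
    (e β : ℕ → ℝ)
    (he : ∀ k < K, 0 ≤ e k) (hβ0 : ∀ k < K, 0 ≤ β k)
    (hβ : ∀ k < K, β k ≤ M₀ / K)
    (hsum : ∑ k ∈ Finset.range K, (α / 2 - L * α ^ 2) * e k ≤
      (∑ k ∈ Finset.range K,
        (α * Real.sqrt (2 * (Cf ^ 2 + μ₀ ^ 2 * Cg ^ 2) * β k) + L * α ^ 2 * β k)) + M₀f) :
    (1 / K) * ∑ k ∈ Finset.range K, e k ≤
      4 * Real.sqrt (2 * M₀ * (Cf ^ 2 + μ₀ ^ 2 * Cg ^ 2)) / Real.sqrt K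
        + 4 * α * L * M₀ / K + 4 * M₀f / (K * α) :=
  msmd_preference_rate_fixed_steps_general K hK L α Cf Cg μ₀ M₀ M₀f hL hα0 hα e β he hβ hsum
end
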